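/- arXiv:1904.11802 — 7 statements merged into one kernel-verified Lean document; each statement's English description precedes it below -/
import Mathlib

section
/- For every element α of the monoid I∞⇗(ℕ) of almost monotone cofinite partial bijections of ℕ and every γ ∈ I∞⇗(ℕ), the sets {χ ∈ I∞⇗(ℕ) : α ∘ χ = γ} and {χ ∈ I∞⇗(ℕ) : χ ∘ α = γ} are finite. -/
/-- Composition of partial selfmaps of ℕ: apply `f` first, then `g`. -/
def PComp (f g : ℕ → Option ℕ) : ℕ → Option ℕ := fun n => (f n).bind g

/-- The identity partial map on ℕ. -/
def pid : ℕ → Option ℕ := fun n => some n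

/-- `f` is injective where defined (a partial bijection). -/
def PInj (f : ℕ → Option ℕ) : Prop := ∀ a b c, f a = some c → f b = some c → a = b

/-- Domain of a partial map. -/
def pdom (f : ℕ → Option ℕ) : Set ℕ := {n | f n ≠ none}

/-- Range of a partial map. -/
def pran (f : ℕ → Option ℕ) : Set ℕ := {m | ∃ n, f n = some m}

/-- `g` is the inverse partial map of `f`. -/
def PInv (f g : ℕ → Option ℕ) : Prop := ∀ a b, f a = some b ↔ g b = some a

/-- Domain and range are cofinite. -/
def PCofinite (f : ℕ → Option ℕ) : Prop := (pdom f)ᶜ.Finite ∧ (pran f)ᶜ.Finite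

/-- `f` is strictly increasing on its domain. -/
def PMono (f : ℕ → Option ℕ) : Prop :=
  ∀ a b c d, f a = some c → f b = some d → a < b → c < d

/-- The monoid `I∞↗(ℕ)`: cofinite monotone injective partial selfmaps of ℕ. -/
def InIoo (f : ℕ → Option ℕ) : Prop := PInj f ∧ PCofinite f ∧ PMono f

/-- The monoid `I∞⇗(ℕ)`: cofinite almost monotone injective partial selfmaps of ℕ. -/
def IAlmost (f : ℕ → Option ℕ) : Prop :=
  PInj f ∧ PCofinite f ∧ ∃ A : Set ℕ, A.Finite ∧
    ∀ a b c d, a ∉ A → b ∉ A → f a = some c → f b = some d → a < b → c < d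

/-- The monoid `Iℕ∞`: cofinite partial isometries of ℕ. -/
def Isom (f : ℕ → Option ℕ) : Prop :=
  PInj f ∧ PCofinite f ∧ ∀ a b c d, f a = some c → f b = some d →
    |(c : ℤ) - (d : ℤ)| = |(a : ℤ) - (b : ℤ)|

/-- The shift `n ↦ n + 1`, defined everywhere. -/
def alphaShift : ℕ → Option ℕ := fun n => some (n + 1)

/-- The inverse partial shift `n ↦ n - 1`, undefined at the least element of ℕ. -/
def betaShift : ℕ → Option ℕ := fun n => if n = 0 then none else some (n - 1)

/-- Iterated composition power of a partial map. -/
def PPow (f : ℕ → Option ℕ) : ℕ → ℕ → Option ℕ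
  | 0 => pid
  | n + 1 => PComp (PPow f n) f

/-! A solution `χ` of `α ∘ χ = γ` is determined on `ran α`, and `χ ∘ α = γ` determines `χ` on
`dom γ` because `α` is injective; on the finite complement each solution takes one of finitely
many values (undefined, or a point outside `ran γ`, resp. outside `dom α`), so there are only
finitely many solutions. -/

theorem Set.Finite.of_eqOn_compl_of_mapsTo {α β : Type*} {S : Set (α → β)} {F : Set α}
    (hF : F.Finite) {V : Set β} (hV : V.Finite)
    (heq : ∀ x ∈ S, ∀ y ∈ S, ∀ m ∉ F, x m = y m) (hmaps : ∀ x ∈ S, ∀ m ∈ F, x m ∈ V) :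
    S.Finite := by
  have : Finite F := hF
  refine Set.Finite.of_finite_image (f := F.domRestrict) ?_ fun x hx y hy hxy => funext fun m => ?_
  · refine (Set.Finite.pi fun _ : F => hV).subset ?_
    rintro _ ⟨x, hx, rfl⟩ m -
    exact hmaps x hx m m.2
  · by_cases hm : m ∈ F
    · exact congrFun hxy ⟨m, hm⟩
    · exact heq x hx y hy m hm

lemma pcomp_apply_of_eq_some {f g : ℕ → Option ℕ} {n m : ℕ} (h : f n = some m) :
    PComp f g n = g m := by
  simp [PComp, h]

lemma pcomp_eq_some_iff {f g : ℕ → Option ℕ} {n k : ℕ} :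
    PComp f g n = some k ↔ ∃ m, f n = some m ∧ g m = some k :=
  Option.bind_eq_some_iff

lemma eq_of_pcomp_left_eq {a x y : ℕ → Option ℕ} (hxy : PComp a x = PComp a y) {m : ℕ}
    (hm : m ∈ pran a) : x m = y m := by
  obtain ⟨n, hn⟩ := hm
  rw [← pcomp_apply_of_eq_some (g := x) hn, hxy, pcomp_apply_of_eq_some hn]

lemma apply_mem_of_notMem_pran {a x : ℕ → Option ℕ} (hx : PInj x) {m : ℕ} (hm : m ∉ pran a) :
    x m ∈ insert none (some '' (pran (PComp a x))ᶜ) := by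
  rcases hxm : x m with _ | k
  · exact Set.mem_insert _ _
  refine Set.mem_insert_of_mem _ ⟨k, ?_, rfl⟩
  rintro ⟨n, hn⟩
  obtain ⟨m', ham', hxm'⟩ := pcomp_eq_some_iff.mp hn
  exact hm ⟨n, hx _ _ _ hxm' hxm ▸ ham'⟩

lemma eq_of_pcomp_right_eq {a x y : ℕ → Option ℕ} (ha : PInj a)
    (hxy : PComp x a = PComp y a) {n : ℕ} (hn : n ∈ pdom (PComp x a)) : x n = y n := by
  obtain ⟨c, hc⟩ := Option.ne_none_iff_exists'.mp hn
  obtain ⟨m, hxm, ham⟩ := pcomp_eq_some_iff.mp hc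
  obtain ⟨m', hym, ham'⟩ := pcomp_eq_some_iff.mp (hxy ▸ hc)
  rw [hxm, hym, ha _ _ _ ham ham']

lemma apply_mem_of_notMem_pdom {a x : ℕ → Option ℕ} {n : ℕ} (hn : n ∉ pdom (PComp x a)) :
    x n ∈ insert none (some '' (pdom a)ᶜ) := by
  rcases hxn : x n with _ | m
  · exact Set.mem_insert _ _
  refine Set.mem_insert_of_mem _ ⟨m, fun hm => hn ?_, rfl⟩
  rwa [pdom, Set.mem_ofPred_eq, pcomp_apply_of_eq_some hxn]

/-- In `I∞⇗(ℕ)` the translation equations `α ∘ χ = γ` and `χ ∘ α = γ` have only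
finitely many solutions. -/
theorem stmt10 (a g : ℕ → Option ℕ) (ha : IAlmost a) (hg : IAlmost g) :
    {x | IAlmost x ∧ PComp a x = g}.Finite ∧
    {x | IAlmost x ∧ PComp x a = g}.Finite := by
  constructor
  · refine Set.Finite.of_eqOn_compl_of_mapsTo ha.2.1.2 ((hg.2.1.2.image some).insert none)
      ?_ ?_
    · rintro x ⟨-, hx⟩ y ⟨-, hy⟩ m hm
      exact eq_of_pcomp_left_eq (hx.trans hy.symm) (not_not.mp hm)
    · rintro x ⟨hxI, rfl⟩ m hm
      exact apply_mem_of_notMem_pran hxI.1 hm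
  · refine Set.Finite.of_eqOn_compl_of_mapsTo hg.2.1.1 ((ha.2.1.1.image some).insert none)
      ?_ ?_
    · rintro x ⟨-, rfl⟩ y ⟨-, hy⟩ n hn
      exact eq_of_pcomp_right_eq ha.1 hy.symm (not_not.mp hn)
    · rintro x ⟨-, rfl⟩ n hn
      exact apply_mem_of_notMem_pdom hn
end

section
/- Let S be an inverse submonoid of I∞⇗(ℕ) containing the bicyclic submonoid C_ℕ generated by the shift n ↦ n+1 and its inverse. Then S is simple: for every β ∈ S there exist γ, δ ∈ S with γ ∘ β ∘ δ equal to the identity of ℕ; hence S has no proper two-sided ideals. -/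
/-
Every element `b` of `I∞⇗(ℕ)` is, beyond some point `K`, a translation: `b (n + K) = n + c`.
Indeed past a finite set `b` is defined and strictly increasing, and a strictly increasing
map `ℕ → ℕ` with cofinite range can only skip finitely many values, so it is eventually
`n ↦ n + const`. Hence applying `α^K`, then `b`, then `β^c` is the identity, with
`α^K, β^c ∈ C_ℕ ⊆ S`, and an ideal containing any `b` contains the identity, hence everything.
-/

lemma pComp_pid (f : ℕ → Option ℕ) : PComp f pid = f := by
  funext n
  simp only [PComp]
  cases f n <;> rfl

lemma pPow_mem {S : Set (ℕ → Option ℕ)} (hid : pid ∈ S)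
    (hmul : ∀ f ∈ S, ∀ g ∈ S, PComp f g ∈ S) {f : ℕ → Option ℕ} (hf : f ∈ S) (k : ℕ) :
    PPow f k ∈ S := by
  induction k with
  | zero => exact hid
  | succ n ih => exact hmul _ ih _ hf

lemma pPow_alphaShift (k n : ℕ) : PPow alphaShift k n = some (n + k) := by
  induction k generalizing n with
  | zero => rfl
  | succ m ih => simp [PPow, PComp, ih, alphaShift, Nat.add_assoc]

lemma pPow_betaShift_add (k n : ℕ) : PPow betaShift k (n + k) = some n := by
  induction k generalizing n with
  | zero => rfl
  | succ m ih =>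
    rw [show n + (m + 1) = n + 1 + m by omega]
    simp [PPow, PComp, ih, betaShift]

lemma StrictMono.exists_eventually_eq_add_const {g : ℕ → ℕ} (hg : StrictMono g)
    (hfin : (Set.range g)ᶜ.Finite) : ∃ M c, ∀ n, M ≤ n → g n = n + c := by
  -- at a jump `g n + 1 < g (n + 1)` the value `g n + 1` is missed, so there are finitely many
  have hjumps : {n | g n + 1 < g (n + 1)}.Finite := by
    refine (Set.Finite.preimage (f := fun n => g n + 1)
      (fun a _ b _ h => hg.injective (by simpa using h)) hfin).subset ?_
    rintro n hn ⟨m, hm⟩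
    simp only [Set.mem_ofPred_eq] at hn hm
    have h1 : n < m := hg.lt_iff_lt.mp (by omega)
    have h2 : g (n + 1) ≤ g m := hg.monotone h1
    omega
  obtain ⟨M, hM⟩ := hjumps.bddAbove
  have hstep : ∀ k, g (M + 1 + k) = g (M + 1) + k := by
    intro k
    induction k with
    | zero => rfl
    | succ j ih =>
      have hnot : ¬ g (M + 1 + j) + 1 < g (M + 1 + j + 1) := fun h => absurd (hM h) (by omega)
      have hlt : g (M + 1 + j) < g (M + 1 + j + 1) := hg (by omega)
      rw [← Nat.add_assoc]
      omega
  refine ⟨M + 1, g (M + 1) - (M + 1), fun n hn => ?_⟩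
  have h1 := hstep (n - (M + 1))
  have h2 : M + 1 ≤ g (M + 1) := hg.le_apply
  rw [Nat.add_sub_cancel' hn] at h1
  omega

lemma IAlmost.exists_strictMono_tail {b : ℕ → Option ℕ} (hb : IAlmost b) :
    ∃ N, ∃ g : ℕ → ℕ, StrictMono g ∧ (Set.range g)ᶜ.Finite ∧ ∀ n, b (N + n) = some (g n) := by
  obtain ⟨-, ⟨hdom, hran⟩, A, hA, hmono⟩ := hb
  obtain ⟨N0, hN0⟩ := (hA.union hdom).bddAbove
  have hgood : ∀ n, N0 < n → n ∉ A ∧ b n ≠ none := fun n hn => by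
    have : n ∉ A ∪ (pdom b)ᶜ := fun h => absurd (hN0 h) (by omega)
    simpa [pdom] using this
  set N := N0 + 1
  set g : ℕ → ℕ := fun n => (b (N + n)).getD 0
  have hgb : ∀ n, b (N + n) = some (g n) := fun n => by
    obtain ⟨m, hm⟩ := Option.ne_none_iff_exists'.mp (hgood (N + n) (by omega)).2
    simp [g, hm]
  have hg : StrictMono g := fun a c hac =>
    hmono _ _ _ _ (hgood _ (by omega)).1 (hgood _ (by omega)).1 (hgb a) (hgb c) (by omega)
  refine ⟨N, g, hg, ?_, hgb⟩
  -- a value outside `range g` is either outside `pran b` or the image of some `n < N`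
  refine (hran.union ((Set.finite_Iio N).image fun n => (b n).getD 0)).subset ?_
  intro m hm
  by_cases hmem : m ∈ pran b
  · obtain ⟨n, hn⟩ := hmem
    rcases le_or_gt N n with h | h
    · refine absurd ⟨n - N, ?_⟩ hm
      have := hgb (n - N)
      rw [Nat.add_sub_cancel' h, hn] at this
      exact (Option.some.inj this).symm
    · exact Or.inr ⟨n, h, by simp [hn]⟩
  · exact Or.inl hmem

lemma IAlmost.exists_eventually_eq_add {b : ℕ → Option ℕ} (hb : IAlmost b) :
    ∃ K c, ∀ n, b (n + K) = some (n + c) := by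
  obtain ⟨N, g, hg, hfin, hgb⟩ := hb.exists_strictMono_tail
  obtain ⟨M, c, hMc⟩ := hg.exists_eventually_eq_add_const hfin
  refine ⟨N + M, M + c, fun n => ?_⟩
  rw [show n + (N + M) = N + (n + M) by omega, hgb, hMc _ (Nat.le_add_left M n), Nat.add_assoc]

lemma pComp_pPow_alphaShift_pPow_betaShift {b : ℕ → Option ℕ} {K c : ℕ}
    (hb : ∀ n, b (n + K) = some (n + c)) :
    PComp (PPow alphaShift K) (PComp b (PPow betaShift c)) = pid := by
  funext n
  simp [PComp, pPow_alphaShift, hb, pPow_betaShift_add, pid]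

theorem stmt11_general (S : Set (ℕ → Option ℕ))
    (hsub : ∀ f ∈ S, IAlmost f) (hid : pid ∈ S)
    (hmul : ∀ f ∈ S, ∀ g ∈ S, PComp f g ∈ S)
    (hα : alphaShift ∈ S) (hβ : betaShift ∈ S) :
    (∀ b ∈ S, ∃ γ ∈ S, ∃ δ ∈ S, PComp γ (PComp b δ) = pid) ∧
    (∀ I : Set (ℕ → Option ℕ), I ⊆ S → I.Nonempty →
      (∀ s ∈ S, ∀ x ∈ I, PComp s x ∈ I ∧ PComp x s ∈ I) → I = S) := by
  have hdiv : ∀ b ∈ S, ∃ γ ∈ S, ∃ δ ∈ S, PComp γ (PComp b δ) = pid := by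
    intro b hb
    obtain ⟨K, c, hKc⟩ := (hsub b hb).exists_eventually_eq_add
    exact ⟨_, pPow_mem hid hmul hα K, _, pPow_mem hid hmul hβ c,
      pComp_pPow_alphaShift_pPow_betaShift hKc⟩
  refine ⟨hdiv, fun I hIS ⟨x, hxI⟩ hideal => ?_⟩
  obtain ⟨γ, hγ, δ, hδ, hγxδ⟩ := hdiv x (hIS hxI)
  have hpid : pid ∈ I := hγxδ ▸ (hideal γ hγ _ (hideal δ hδ x hxI).2).1
  refine hIS.antisymm fun s hs => ?_
  simpa [pComp_pid] using (hideal s hs pid hpid).1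

/-- An inverse submonoid `S` of `I∞⇗(ℕ)` containing the bicyclic submonoid `C_ℕ`
is simple: every element divides the identity two-sidedly, and `S` has no proper
two-sided ideal. -/
theorem stmt11 (S : Set (ℕ → Option ℕ))
    (hsub : ∀ f ∈ S, IAlmost f) (hid : pid ∈ S)
    (hmul : ∀ f ∈ S, ∀ g ∈ S, PComp f g ∈ S)
    (hinv : ∀ f ∈ S, ∃ g ∈ S, PInv f g)
    (hα : alphaShift ∈ S) (hβ : betaShift ∈ S) :
    (∀ b ∈ S, ∃ γ ∈ S, ∃ δ ∈ S, PComp γ (PComp b δ) = pid) ∧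
    (∀ I : Set (ℕ → Option ℕ), I ⊆ S → I.Nonempty →
      (∀ s ∈ S, ∀ x ∈ I, PComp s x ∈ I ∧ PComp x s ∈ I) → I = S) :=
  stmt11_general S hsub hid hmul hα hβ
end

section
/- For every element α of I∞⇗(ℕ) there is a smallest n ∈ dom α such that the restriction of α to [n) = {m ∈ ℕ : m ≥ n} is a translation: there exists an integer k with α(m) = m + k for all m ≥ n in dom α, and [n) ⊆ dom α. -/
def StrictMonoFrom (f : ℕ → Option ℕ) (M : ℕ) : Prop :=
  (∀ m, M ≤ m → ∃ c, f m = some c) ∧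
    ∀ a b c d, M ≤ a → a < b → f a = some c → f b = some d → c < d

theorem IAlmost.exists_strictMonoFrom {f : ℕ → Option ℕ} (hf : IAlmost f) :
    ∃ M, StrictMonoFrom f M := by
  obtain ⟨-, ⟨hdom, -⟩, A, hA, hmono⟩ := hf
  obtain ⟨B, hB⟩ := (hA.union hdom).bddAbove
  have hout : ∀ m, B < m → m ∉ A ∧ m ∈ pdom f := fun m hm => by
    by_contra h
    exact absurd (hB (by tauto : m ∈ A ∪ (pdom f)ᶜ)) (not_le.2 hm)
  refine ⟨B + 1, fun m hm => Option.ne_none_iff_exists'.1 (hout m hm).2, ?_⟩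
  intro a b c d ha hab hfa hfb
  exact hmono a b c d (hout a ha).1 (hout b (by omega)).1 hfa hfb hab

theorem PCofinite.exists_bound {f : ℕ → Option ℕ} (hf : PCofinite f) (M : ℕ) :
    ∃ B, (∀ a v, a < M → f a = some v → v ≤ B) ∧ ∀ v, B < v → ∃ a, f a = some v := by
  have hlow : {v | ∃ a < M, f a = some v}.Finite :=
    ((Set.finite_Iio M).image fun a => (f a).getD 0).subset
      fun v ⟨a, ha, hfa⟩ => ⟨a, ha, by simp [hfa]⟩
  obtain ⟨B, hB⟩ := (hlow.union hf.2).bddAbove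
  refine ⟨B, fun a v ha hfa => hB (Or.inl ⟨a, ha, hfa⟩), fun v hv => ?_⟩
  by_contra h
  exact absurd (hB (Or.inr h)) (not_le.2 hv)

namespace StrictMonoFrom

variable {f : ℕ → Option ℕ} {M : ℕ}

theorem sub_le (h : StrictMonoFrom f M) {m c : ℕ} (hm : M ≤ m) (hfm : f m = some c) :
    m - M ≤ c := by
  induction m, hm using Nat.le_induction generalizing c with
  | base => omega
  | succ m hm ih =>
    obtain ⟨c', hc'⟩ := h.1 m hm
    have := h.2 m (m + 1) c' c hm (by omega) hc' hfm
    have := ih hc'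
    omega

theorem succ_eq (h : StrictMonoFrom f M) {B : ℕ}
    (hlow : ∀ a v, a < M → f a = some v → v ≤ B) (hran : ∀ v, B < v → ∃ a, f a = some v)
    {m c : ℕ} (hm : M ≤ m) (hfm : f m = some c) (hBc : B ≤ c) :
    f (m + 1) = some (c + 1) := by
  obtain ⟨a, ha⟩ := hran (c + 1) (by omega)
  have haM : M ≤ a := by
    by_contra haM
    have := hlow a (c + 1) (by omega) ha
    omega
  obtain ⟨d, hd⟩ := h.1 (m + 1) (by omega)
  have hcd := h.2 m (m + 1) c d hm (by omega) hfm hd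
  suffices a = m + 1 by rwa [this] at ha
  rcases lt_trichotomy a (m + 1) with hlt | heq | hgt
  · rcases Nat.lt_succ_iff_lt_or_eq.1 hlt with hlt | rfl
    · have := h.2 a m (c + 1) c haM hlt ha hfm
      omega
    · rw [hfm] at ha
      simp at ha
  · exact heq
  · have := h.2 (m + 1) a d (c + 1) (by omega) hgt hd ha
    omega

theorem eq_add (h : StrictMonoFrom f M) {B : ℕ}
    (hlow : ∀ a v, a < M → f a = some v → v ≤ B) (hran : ∀ v, B < v → ∃ a, f a = some v)
    {N c : ℕ} (hN : M ≤ N) (hfN : f N = some c) (hBc : B ≤ c) (t : ℕ) :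
    f (N + t) = some (c + t) := by
  induction t with
  | zero => exact hfN
  | succ t ih =>
    rw [← Nat.add_assoc, ← Nat.add_assoc]
    exact h.succ_eq hlow hran (Nat.le_add_right_of_le hN) ih (Nat.le_add_right_of_le hBc)

end StrictMonoFrom

theorem IAlmost.exists_translation_tail {f : ℕ → Option ℕ} (hf : IAlmost f) :
    ∃ n, ∃ k : ℤ, ∀ m, n ≤ m → ∃ c, f m = some c ∧ (c : ℤ) = (m : ℤ) + k := by
  obtain ⟨M, hM⟩ := hf.exists_strictMonoFrom
  obtain ⟨B, hlow, hran⟩ := hf.2.1.exists_bound M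
  obtain ⟨c, hc⟩ := hM.1 (M + B) (by omega)
  have hBc : B ≤ c := by simpa using hM.sub_le (by omega) hc
  refine ⟨M + B, c - (M + B : ℕ), fun m hm => ⟨c + (m - (M + B)), ?_, by push_cast [hm]; ring⟩⟩
  simpa [Nat.add_sub_cancel' hm] using hM.eq_add hlow hran (by omega) hc hBc (m - (M + B))

/-- Every element of `I∞⇗(ℕ)` agrees with a translation `m ↦ m + k` on a terminal
segment `[n) ⊆ dom α` of ℕ, and there is a smallest such `n` (which lies in `dom α`). -/
theorem stmt12 (f : ℕ → Option ℕ) (hf : IAlmost f) :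
    ∃ n : ℕ,
      (∃ k : ℤ, ∀ m, n ≤ m → ∃ c, f m = some c ∧ (c : ℤ) = (m : ℤ) + k) ∧
      (∀ n' : ℕ, (∃ k : ℤ, ∀ m, n' ≤ m → ∃ c, f m = some c ∧ (c : ℤ) = (m : ℤ) + k) →
        n ≤ n') := by
  classical
  have hP := hf.exists_translation_tail
  exact ⟨Nat.find hP, Nat.find_spec hP, fun n' h => Nat.find_le h⟩
end

section
/- Define F: I∞⇗(ℕ) → ℤ by F(α) = α(n) − n for any sufficiently large n ∈ dom α (α eventually acts as a translation by a constant). Then F is well-defined and is a monoid homomorphism from (I∞⇗(ℕ), ∘) to the additive group of integers (ℤ, +). -/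
theorem StrictMono.exists_add_const_of_Ici_subset_range {h : ℕ → ℕ} (hh : StrictMono h) {R : ℕ}
    (hR : ∀ v ≥ R, v ∈ Set.range h) : ∃ k : ℤ, ∀ m ≥ R, (h m : ℤ) = m + k := by
  have step : ∀ m ≥ R, h (m + 1) = h m + 1 := by
    intro m hm
    obtain ⟨x, hx⟩ := hR (h m + 1) (by have : m ≤ h m := hh.le_apply; omega)
    have hmx : m < x := hh.lt_iff_lt.mp (by omega)
    have hxm : h (m + 1) ≤ h x := hh.monotone (by omega)
    have := hh (lt_add_one m)
    omega
  refine ⟨h R - R, fun m hm => ?_⟩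
  induction m, hm using Nat.le_induction with
  | base => ring
  | succ m hm ih => rw [step m hm]; push_cast; omega

def EventuallyTranslates (f : ℕ → Option ℕ) (k : ℤ) : Prop :=
  ∃ N : ℕ, ∀ m ≥ N, ∃ c, f m = some c ∧ (c : ℤ) = (m : ℤ) + k

namespace EventuallyTranslates

theorem unique {f : ℕ → Option ℕ} {k l : ℤ} (hk : EventuallyTranslates f k)
    (hl : EventuallyTranslates f l) : k = l := by
  obtain ⟨N, hN⟩ := hk
  obtain ⟨N', hN'⟩ := hl
  obtain ⟨c, hc, hck⟩ := hN (max N N') (le_max_left _ _)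
  obtain ⟨c', hc', hcl⟩ := hN' (max N N') (le_max_right _ _)
  rw [hc, Option.some_inj] at hc'
  omega

theorem pid : EventuallyTranslates pid 0 :=
  ⟨0, fun m _ => ⟨m, rfl, by simp⟩⟩

theorem pComp {f g : ℕ → Option ℕ} {k l : ℤ} (hf : EventuallyTranslates f k)
    (hg : EventuallyTranslates g l) : EventuallyTranslates (PComp f g) (k + l) := by
  obtain ⟨Nf, hNf⟩ := hf
  obtain ⟨Ng, hNg⟩ := hg
  refine ⟨max Nf (Ng + k.natAbs), fun m hm => ?_⟩
  obtain ⟨c, hc, hck⟩ := hNf m (le_of_max_le_left hm)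
  obtain ⟨d, hd, hdl⟩ := hNg c (by have := le_of_max_le_right hm; omega)
  exact ⟨d, by rw [PComp, hc, Option.bind_some, hd], by omega⟩

end EventuallyTranslates

namespace IAlmost

variable {f : ℕ → Option ℕ}

theorem exists_tail_strictMono (hf : IAlmost f) : ∃ N : ℕ,
    (∀ m ≥ N, f m = some ((f m).getD 0)) ∧ StrictMono fun i => (f (i + N)).getD 0 := by
  obtain ⟨-, ⟨hdom, -⟩, A, hA, hmono⟩ := hf
  obtain ⟨B, hB⟩ := (hA.union hdom).bddAbove
  have hdef : ∀ m > B, f m = some ((f m).getD 0) := by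
    intro m hm
    have hm' : m ∈ pdom f := by_contra fun h => absurd (hB (Or.inr h)) (by omega)
    obtain ⟨c, hc⟩ := Option.ne_none_iff_exists'.mp hm'
    simp [hc]
  refine ⟨B + 1, fun m hm => hdef m hm, fun i j hij => ?_⟩
  have hA' : ∀ m > B, m ∉ A := fun m hm hmA => absurd (hB (Or.inl hmA)) (by omega)
  exact hmono _ _ _ _ (hA' _ (by omega)) (hA' _ (by omega)) (hdef _ (by omega))
    (hdef _ (by omega)) (by omega)

theorem exists_eventuallyTranslates (hf : IAlmost f) : ∃ k, EventuallyTranslates f k := by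
  obtain ⟨N, hdef, hmono⟩ := hf.exists_tail_strictMono
  set g : ℕ → ℕ := fun m => (f m).getD 0
  -- Values of `f` on `[0, N)` are finitely many, so large values are attained beyond `N`.
  obtain ⟨R, hR⟩ := (hf.2.1.2.union ((Set.finite_Iio N).image g)).bddAbove
  have hsurj : ∀ v ≥ R + 1, v ∈ Set.range fun i => g (i + N) := by
    intro v hv
    have hvran : v ∈ pran f := by_contra fun h => absurd (hR (Or.inl h)) (by omega)
    obtain ⟨x, hx⟩ := hvran
    have hgx : g x = v := by simp [g, hx]
    have hxN : N ≤ x := by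
      by_contra! hxN
      exact absurd (hR (Or.inr ⟨x, hxN, hgx⟩)) (by omega)
    exact ⟨x - N, by simp only [Nat.sub_add_cancel hxN, hgx]⟩
  obtain ⟨k, hk⟩ := hmono.exists_add_const_of_Ici_subset_range hsurj
  refine ⟨k - N, R + 1 + N, fun m hm => ⟨g m, hdef m (by omega), ?_⟩⟩
  have hNm : N ≤ m := by omega
  have := hk (m - N) (by omega)
  rw [Nat.sub_add_cancel hNm, Nat.cast_sub hNm] at this
  change ((f m).getD 0 : ℤ) = m + (k - N)
  omega

end IAlmost

open Classical in
/-- `F(α)`, with junk value `0` on maps that are not eventually translations. -/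
noncomputable def eventualShift (f : ℕ → Option ℕ) : ℤ :=
  if h : ∃ k, EventuallyTranslates f k then h.choose else 0

theorem eventualShift_spec {f : ℕ → Option ℕ} (h : ∃ k, EventuallyTranslates f k) :
    EventuallyTranslates f (eventualShift f) := by
  rw [eventualShift, dif_pos h]
  exact h.choose_spec

theorem EventuallyTranslates.eventualShift_eq {f : ℕ → Option ℕ} {k : ℤ}
    (h : EventuallyTranslates f k) : eventualShift f = k :=
  (eventualShift_spec ⟨k, h⟩).unique h

/-- The map sending `α ∈ I∞⇗(ℕ)` to its eventual translation constant is well defined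
and is a monoid homomorphism to the additive group of integers. -/
theorem stmt13 :
    ∃ F : (ℕ → Option ℕ) → ℤ,
      (∀ f, IAlmost f → ∃ N : ℕ, ∀ m ≥ N, ∃ c, f m = some c ∧ (c : ℤ) = (m : ℤ) + F f) ∧
      F pid = 0 ∧
      (∀ f g, IAlmost f → IAlmost g → F (PComp f g) = F f + F g) := by
  have translates {f} (hf : IAlmost f) : EventuallyTranslates f (eventualShift f) :=
    eventualShift_spec hf.exists_eventuallyTranslates
  exact ⟨eventualShift, fun f hf => translates hf, EventuallyTranslates.pid.eventualShift_eq,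
    fun f g hf hg => ((translates hf).pComp (translates hg)).eventualShift_eq⟩
end

section
/- Let S be a dense discrete subsemigroup of a T1 semitopological semigroup T, and suppose that for all α, γ ∈ S the sets {χ ∈ S : α χ = γ} and {χ ∈ S : χ α = γ} are finite. If I = T \ S is nonempty then I is a two-sided ideal of T. -/
/-!
A point isolated in a dense set of a `T1` space is isolated in the whole space, so `S` is open and
`T \ S` is closed. For `a ∈ S` and `x ∉ S`, if `a * x = c ∈ S`, the open set `{y | a * y = c}`
contains `x ∉ S` and meets `S` in finitely many points, whereas in a `T1` space an open set meeting
a dense set in a finite set lies inside it; hence `S * x ⊆ T \ S`. Continuity of `· * x` and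
density of `S` then give `T * x ⊆ T \ S`, and symmetrically on the other side.
-/

open Set

universe u v

variable {X : Type u} {Y : Type v} [TopologicalSpace X] [TopologicalSpace Y]

theorem Dense.eq_singleton_of_inter_eq_singleton [T1Space X] {S U : Set X} {c : X}
    (hS : Dense S) (hU : IsOpen U) (h : U ∩ S = {c}) : U = {c} := by
  refine (hS.open_subset_closure_inter hU).trans ?_ |>.antisymm ?_
  · rw [h, closure_singleton]
  · rw [← h]
    exact inter_subset_left

theorem Dense.subset_of_isOpen_of_finite_inter [T1Space X] {S V : Set X} (hS : Dense S)
    (hV : IsOpen V) (hfin : (V ∩ S).Finite) : V ⊆ S :=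
  calc V ⊆ closure (V ∩ S) := hS.open_subset_closure_inter hV
    _ = V ∩ S := hfin.isClosed.closure_eq
    _ ⊆ S := inter_subset_right

theorem Dense.mapsTo_compl_of_finite_fibers [T1Space X] {S : Set X} {R : Set Y} {f : X → Y}
    (hS : Dense S) (hR : ∀ c ∈ R, IsOpen ({c} : Set Y)) (hf : Continuous f)
    (hfin : ∀ c ∈ R, {x ∈ S | f x = c}.Finite) : MapsTo f Sᶜ Rᶜ := by
  intro x hx hfx
  have hV : IsOpen (f ⁻¹' {f x}) := (hR _ hfx).preimage hf
  refine hx (hS.subset_of_isOpen_of_finite_inter hV ((hfin _ hfx).subset ?_) rfl)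
  rintro y ⟨hy, hyS⟩
  exact ⟨hyS, hy⟩

theorem stmt17_general {T : Type*} [TopologicalSpace T] [Semigroup T] [T1Space T]
    (hl : ∀ a : T, Continuous fun x => a * x)
    (hr : ∀ a : T, Continuous fun x => x * a)
    (S : Set T)
    (hdense : Dense S)
    (hdisc : ∀ x ∈ S, ∃ U : Set T, IsOpen U ∧ U ∩ S = {x})
    (hfin : ∀ a ∈ S, ∀ c ∈ S,
      {x ∈ S | a * x = c}.Finite ∧ {x ∈ S | x * a = c}.Finite) :
    ∀ x ∈ Sᶜ, ∀ t : T, t * x ∈ Sᶜ ∧ x * t ∈ Sᶜ := by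
  intro x hx t
  have hsingleton : ∀ c ∈ S, IsOpen ({c} : Set T) := fun c hc ↦ by
    obtain ⟨U, hU, hUS⟩ := hdisc c hc
    rwa [← hdense.eq_singleton_of_inter_eq_singleton hU hUS]
  have hclosed : IsClosed Sᶜ := isClosed_compl_iff.2 <| isOpen_iff_forall_mem_open.2
    fun c hc ↦ ⟨{c}, singleton_subset_iff.2 hc, hsingleton c hc, rfl⟩
  have hleft : MapsTo (· * x) S Sᶜ := fun a ha ↦
    hdense.mapsTo_compl_of_finite_fibers hsingleton (hl a) (fun c hc ↦ (hfin a ha c hc).1) hx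
  have hright : MapsTo (x * ·) S Sᶜ := fun a ha ↦
    hdense.mapsTo_compl_of_finite_fibers hsingleton (hr a) (fun c hc ↦ (hfin a ha c hc).2) hx
  have ht : t ∈ closure S := hdense.closure_eq ▸ mem_univ t
  exact ⟨hleft.closure_left (hr x) hclosed ht, hright.closure_left (hl x) hclosed ht⟩

/-- If a dense discrete subsemigroup `S` of a `T1` semitopological semigroup `T` has the
property that all translation equations over `S` have finitely many solutions, then the
nonempty remainder `T \ S` is a two-sided ideal of `T`. -/
theorem stmt17 {T : Type*} [TopologicalSpace T] [Semigroup T] [T1Space T]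
    (hl : ∀ a : T, Continuous fun x => a * x)
    (hr : ∀ a : T, Continuous fun x => x * a)
    (S : Set T) (hmulS : ∀ a ∈ S, ∀ b ∈ S, a * b ∈ S)
    (hdense : Dense S)
    (hdisc : ∀ x ∈ S, ∃ U : Set T, IsOpen U ∧ U ∩ S = {x})
    (hfin : ∀ a ∈ S, ∀ c ∈ S,
      {x ∈ S | a * x = c}.Finite ∧ {x ∈ S | x * a = c}.Finite)
    (hne : Sᶜ.Nonempty) :
    ∀ x ∈ Sᶜ, ∀ t : T, t * x ∈ Sᶜ ∧ x * t ∈ Sᶜ :=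
  stmt17_general hl hr S hdense hdisc hfin
end

section
/- Let S be a countable semigroup that is simple (for every γ ∈ S and some fixed μ ∈ S there exist α, β ∈ S with α γ β = μ) and such that for all α, β ∈ S the equation sets {χ : α χ β = μ} are finite for each μ. Then every Hausdorff shift-continuous Baire topology on S is discrete. -/
/-!
By the Baire category theorem a nonempty countable T1 Baire space has an isolated point `x₀`.
Given any `μ`, simplicity gives `a`, `b` with `a * μ * b = x₀`; the map `x ↦ a * x * b` is
continuous, so the fibre over `x₀` is an open set, finite by hypothesis, containing `μ`.
In a T1 space a finite open set consists of isolated points, so `μ` is isolated.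
-/

open Set

theorem exists_isOpen_singleton_of_countable (X : Type*) [TopologicalSpace X] [T1Space X]
    [BaireSpace X] [Countable X] [Nonempty X] : ∃ x : X, IsOpen ({x} : Set X) := by
  obtain ⟨x, hx⟩ := nonempty_interior_of_iUnion_of_closed
    (f := fun x : X => ({x} : Set X)) (fun _ => isClosed_singleton) (iUnion_of_singleton X)
  exact ⟨x, hx.subset_singleton_iff.mp interior_subset ▸ isOpen_interior⟩

theorem isOpen_singleton_of_finite_fiber {X Y : Type*} [TopologicalSpace X] [T1Space X]
    [TopologicalSpace Y] {f : X → Y} (hf : Continuous f) {x : X}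
    (hopen : IsOpen ({f x} : Set Y)) (hfin : (f ⁻¹' {f x}).Finite) : IsOpen ({x} : Set X) :=
  isOpen_singleton_of_finite_mem_nhds x ((hopen.preimage hf).mem_nhds rfl) hfin

/-- A countable simple semigroup in which the sets of solutions of `α χ β = μ` are
finite admits only discrete Hausdorff shift-continuous Baire topologies. -/
theorem stmt18 {S : Type*} [Semigroup S] [Countable S]
    [TopologicalSpace S] [T2Space S] [BaireSpace S]
    (hl : ∀ a : S, Continuous fun x => a * x)
    (hr : ∀ a : S, Continuous fun x => x * a)
    (hsimple : ∀ γ μ : S, ∃ a b : S, a * γ * b = μ)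
    (hfin : ∀ a b μ : S, {x : S | a * x * b = μ}.Finite) :
    DiscreteTopology S := by
  refine discreteTopology_iff_isOpen_singleton.mpr fun μ => ?_
  have : Nonempty S := ⟨μ⟩
  obtain ⟨x₀, hx₀⟩ := exists_isOpen_singleton_of_countable S
  obtain ⟨a, b, hab⟩ := hsimple μ x₀
  refine isOpen_singleton_of_finite_fiber (f := fun x => a * x * b) ((hr b).comp (hl a)) ?_ ?_
  · rwa [hab]
  · rw [hab]; exact hfin a b x₀
end

section
/- The family of sets U_α(F) = {β ∈ Iℕ∞ : dom β ⊆ dom α and β(x) = α(x) for all x ∈ F}, indexed over α ∈ Iℕ∞ and finite F ⊆ dom α, forms a base of a topology τ_W on Iℕ∞ under which composition of partial maps is (jointly) continuous and inversion is continuous; moreover τ_W is not discrete. -/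
/-- The inverse monoid `Iℕ∞` of cofinite partial isometries of ℕ. -/
abbrev INf := {f : ℕ → Option ℕ // Isom f}

/-- The basic neighbourhoods `U_α(F)` of the topology `τ_W`. -/
def UW (a : INf) (F : Finset ℕ) : Set INf :=
  {b | pdom b.val ⊆ pdom a.val ∧ ∀ x ∈ F, b.val x = a.val x}

/-- The family of all basic sets `U_α(F)` with `F` a finite subset of `dom α`. -/
def BW : Set (Set INf) :=
  {s | ∃ (a : INf) (F : Finset ℕ), (↑F : Set ℕ) ⊆ pdom a.val ∧ s = UW a F}

/-!
Every `α ∈ Iℕ∞` is a translation `x ↦ x + k` on its (infinite) domain, so an element `β` with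
`dom β ⊆ dom α` that agrees with `α` at a single point is a restriction of `α`. Hence adding one
point of the domain to `F` makes every member of `U_α(F)` a restriction of `α`; restrictions
compose and invert to restrictions, and finitely many values of `α ∘ β` or `α⁻¹` are determined
by finitely many values of `α` and `β`. This gives continuity of composition and inversion. The
topology is not discrete because erasing from `α` a point outside `F` stays inside `U_α(F)`.
-/

lemma mem_pdom_iff {f : ℕ → Option ℕ} {n : ℕ} : n ∈ pdom f ↔ ∃ m, f n = some m :=
  Option.ne_none_iff_exists'

lemma mem_pdom_of_eq_some {f : ℕ → Option ℕ} {n m : ℕ} (h : f n = some m) : n ∈ pdom f :=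
  mem_pdom_iff.2 ⟨m, h⟩

lemma mem_pdom_PComp {f g : ℕ → Option ℕ} {n : ℕ} :
    n ∈ pdom (PComp f g) ↔ ∃ m, f n = some m ∧ m ∈ pdom g := by
  simp only [pdom, PComp, Set.mem_ofPred_eq]
  cases h : f n <;> simp

def pimage (f : ℕ → Option ℕ) (F : Finset ℕ) : Finset ℕ := F.biUnion fun x => (f x).toFinset

lemma mem_pimage {f : ℕ → Option ℕ} {F : Finset ℕ} {y : ℕ} :
    y ∈ pimage f F ↔ ∃ x ∈ F, f x = some y := by
  simp [pimage, Option.mem_def]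

def Restricts (f g : ℕ → Option ℕ) : Prop := ∀ x y, f x = some y → g x = some y

lemma Restricts.pdom_subset {f g : ℕ → Option ℕ} (h : Restricts f g) : pdom f ⊆ pdom g :=
  fun _ hx => by
    obtain ⟨y, hy⟩ := mem_pdom_iff.1 hx
    exact mem_pdom_of_eq_some (h _ _ hy)

lemma Restricts.PComp {f f' g g' : ℕ → Option ℕ} (hf : Restricts f' f) (hg : Restricts g' g) :
    Restricts (PComp f' g') (PComp f g) := by
  intro x z h
  simp only [_root_.PComp, Option.bind_eq_some_iff] at h ⊢
  obtain ⟨y, hy, hz⟩ := h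
  exact ⟨y, hf _ _ hy, hg _ _ hz⟩

lemma Restricts.PInv {f f' g g' : ℕ → Option ℕ} (hf : Restricts f' f) (hg : _root_.PInv f g)
    (hg' : _root_.PInv f' g') : Restricts g' g :=
  fun x y h => (hg y x).1 (hf _ _ ((hg' y x).2 h))

lemma restricts_update_none (f : ℕ → Option ℕ) (m : ℕ) :
    Restricts (Function.update f m none) f := by
  intro x y h
  rcases eq_or_ne x m with rfl | hxm
  · simp at h
  · rwa [Function.update_of_ne hxm] at h

lemma isom_pid : Isom pid := by
  simp [Isom, PInj, PCofinite, pid, pdom, pran]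

lemma Isom.pdom_infinite {f : ℕ → Option ℕ} (hf : Isom f) : (pdom f).Infinite := by
  simpa using hf.2.1.1.infinite_compl

lemma Isom.sub_eq_sub {f : ℕ → Option ℕ} (hf : Isom f) {a b c d : ℕ}
    (ha : f a = some c) (hb : f b = some d) : (c : ℤ) - a = (d : ℤ) - b := by
  -- a point `e` of the domain far to the right must go to both `c + (e - a)` and `d + (e - b)`
  obtain ⟨e, he, hgt⟩ := hf.pdom_infinite.exists_gt (a + b + c + d)
  obtain ⟨m, hm⟩ := mem_pdom_iff.1 he
  have hac := hf.2.2 a e c m ha hm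
  have hbd := hf.2.2 b e d m hb hm
  rw [abs_of_neg (by omega : (a : ℤ) - e < 0)] at hac
  rw [abs_of_neg (by omega : (b : ℤ) - e < 0)] at hbd
  rcases abs_cases ((c : ℤ) - m) with ⟨h₁, -⟩ | ⟨h₁, -⟩ <;>
    rcases abs_cases ((d : ℤ) - m) with ⟨h₂, -⟩ | ⟨h₂, -⟩ <;> omega

lemma Isom.restricts_of_agree {f g : ℕ → Option ℕ} (hf : Isom f) (hg : Isom g)
    (hdom : pdom f ⊆ pdom g) {n₀ m₀ : ℕ} (hf₀ : f n₀ = some m₀) (hg₀ : g n₀ = some m₀) :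
    Restricts f g := by
  intro x y hxy
  obtain ⟨z, hz⟩ := mem_pdom_iff.1 (hdom (mem_pdom_of_eq_some hxy))
  have hfx := hf.sub_eq_sub hxy hf₀
  have hgx := hg.sub_eq_sub hz hg₀
  rw [hz, show z = y by omega]

lemma Isom.update_none {f : ℕ → Option ℕ} (hf : Isom f) (m : ℕ) :
    Isom (Function.update f m none) := by
  have hres := restricts_update_none f m
  refine ⟨fun a b c ha hb => hf.1 a b c (hres _ _ ha) (hres _ _ hb), ⟨?_, ?_⟩,
    fun a b c d ha hb => hf.2.2 a b c d (hres _ _ ha) (hres _ _ hb)⟩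
  · refine (hf.2.1.1.insert m).subset fun x hx => ?_
    rcases eq_or_ne x m with rfl | hxm
    · exact Set.mem_insert _ _
    · exact Or.inr (by simpa [pdom, Function.update_of_ne hxm] using hx)
  · refine (hf.2.1.2.union (f m).toFinset.finite_toSet).subset fun y hy => ?_
    by_contra hcon
    simp only [pran, Set.mem_union, Set.mem_compl_iff, Set.mem_ofPred_eq, not_or, not_not,
      Finset.mem_coe, Option.mem_toFinset, Option.mem_def] at hy hcon
    obtain ⟨⟨x, hx⟩, hym⟩ := hcon
    have hxm : x ≠ m := by rintro rfl; exact hym hx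
    exact hy ⟨x, by rwa [Function.update_of_ne hxm]⟩

def INf.erase (a : INf) (m : ℕ) : INf := ⟨Function.update a.val m none, a.2.update_none m⟩

lemma INf.erase_ne {a : INf} {m : ℕ} (hm : m ∈ pdom a.val) : a.erase m ≠ a := fun h =>
  hm (by simpa [INf.erase] using (congrFun (congrArg Subtype.val h) m).symm)

lemma self_mem_UW (a : INf) (F : Finset ℕ) : a ∈ UW a F := ⟨subset_rfl, fun _ _ => rfl⟩

lemma UW_subset_UW {a b : INf} {F G : Finset ℕ} (hb : b ∈ UW a F) (hFG : F ⊆ G) :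
    UW b G ⊆ UW a F :=
  fun _ hc => ⟨hc.1.trans hb.1, fun x hx => (hc.2 x (hFG hx)).trans (hb.2 x hx)⟩

lemma coe_subset_pdom_of_mem_UW {a b : INf} {F : Finset ℕ} (hb : b ∈ UW a F)
    (hF : ↑F ⊆ pdom a.val) : ↑F ⊆ pdom b.val :=
  fun x hx => by simpa [pdom, hb.2 x hx] using hF hx

lemma restricts_of_mem_UW {a b : INf} {F : Finset ℕ} (hb : b ∈ UW a F) {n₀ : ℕ}
    (hn₀F : n₀ ∈ F) (hn₀ : n₀ ∈ pdom a.val) : Restricts b.val a.val := by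
  obtain ⟨m₀, hm₀⟩ := mem_pdom_iff.1 hn₀
  exact b.2.restricts_of_agree a.2 hb.1 ((hb.2 n₀ hn₀F).trans hm₀) hm₀

lemma INf.erase_mem_UW (a : INf) {F : Finset ℕ} {m : ℕ} (hm : m ∉ F) : a.erase m ∈ UW a F :=
  ⟨(restricts_update_none a.val m).pdom_subset, fun _ hx =>
    Function.update_of_ne (ne_of_mem_of_not_mem hx hm) _ _⟩

lemma exists_UW_comp_mem_UW {comp : INf → INf → INf}
    (hcomp : ∀ a b, (comp a b).val = PComp a.val b.val) (a b : INf) (F : Finset ℕ)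
    (hF : ↑F ⊆ pdom (comp a b).val) :
    ∃ G H : Finset ℕ, ↑G ⊆ pdom a.val ∧ ↑H ⊆ pdom b.val ∧
      ∀ a' ∈ UW a G, ∀ b' ∈ UW b H, comp a' b' ∈ UW (comp a b) F := by
  obtain ⟨n₀, hn₀⟩ := (comp a b).2.pdom_infinite.nonempty
  have hG : ↑(insert n₀ F) ⊆ pdom (PComp a.val b.val) := by
    rw [← hcomp, Finset.coe_insert, Set.insert_subset_iff]
    exact ⟨hn₀, hF⟩
  obtain ⟨m₀, ha₀, hb₀⟩ := mem_pdom_PComp.1 (hG (Finset.mem_insert_self n₀ F))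
  refine ⟨insert n₀ F, pimage a.val (insert n₀ F), fun x hx => ?_, fun y hy => ?_,
    fun a' ha' b' hb' => ⟨?_, fun x hx => ?_⟩⟩
  · obtain ⟨y, hy, -⟩ := mem_pdom_PComp.1 (hG hx)
    exact mem_pdom_of_eq_some hy
  · obtain ⟨x, hx, hxy⟩ := mem_pimage.1 hy
    obtain ⟨y', hy', hy'b⟩ := mem_pdom_PComp.1 (hG hx)
    rwa [Option.some_injective _ (hxy.symm.trans hy')]
  · have hra := restricts_of_mem_UW ha' (Finset.mem_insert_self n₀ F) (mem_pdom_of_eq_some ha₀)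
    have hrb := restricts_of_mem_UW hb'
      (mem_pimage.2 ⟨n₀, Finset.mem_insert_self n₀ F, ha₀⟩) hb₀
    rw [hcomp, hcomp]
    exact (hra.PComp hrb).pdom_subset
  · have hxG : x ∈ insert n₀ F := Finset.mem_insert_of_mem hx
    obtain ⟨y, hy, -⟩ := mem_pdom_PComp.1 (hG hxG)
    rw [hcomp, hcomp]
    simp only [PComp, ha'.2 x hxG, hy, Option.bind_some]
    exact hb'.2 y (mem_pimage.2 ⟨x, hxG, hy⟩)

lemma exists_UW_inv_mem_UW {inv : INf → INf} (hinv : ∀ a, PInv a.val (inv a).val) (a : INf)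
    (F : Finset ℕ) (hF : ↑F ⊆ pdom (inv a).val) :
    ∃ G : Finset ℕ, ↑G ⊆ pdom a.val ∧ ∀ a' ∈ UW a G, inv a' ∈ UW (inv a) F := by
  obtain ⟨n₀, hn₀⟩ := a.2.pdom_infinite.nonempty
  refine ⟨insert n₀ (pimage (inv a).val F), ?_, fun a' ha' => ⟨?_, fun y hy => ?_⟩⟩
  · rw [Finset.coe_insert, Set.insert_subset_iff]
    refine ⟨hn₀, fun x hx => ?_⟩
    obtain ⟨y, -, hyx⟩ := mem_pimage.1 hx
    exact mem_pdom_of_eq_some ((hinv a x y).2 hyx)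
  · exact ((restricts_of_mem_UW ha' (Finset.mem_insert_self _ _) hn₀).PInv (hinv a)
      (hinv a')).pdom_subset
  · obtain ⟨x, hx⟩ := mem_pdom_iff.1 (hF hy)
    rw [hx, ← hinv a', ha'.2 x (Finset.mem_insert_of_mem (mem_pimage.2 ⟨y, hy, hx⟩)), hinv a]
    exact hx

abbrev tauW : TopologicalSpace INf := TopologicalSpace.generateFrom BW

section TauW

attribute [local instance] tauW

lemma isTopologicalBasis_BW : TopologicalSpace.IsTopologicalBasis BW := by
  refine ⟨?_, ?_, rfl⟩
  · rintro _ ⟨a₁, F₁, hF₁, rfl⟩ _ ⟨a₂, F₂, hF₂, rfl⟩ x ⟨hx₁, hx₂⟩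
    have hF : ↑(F₁ ∪ F₂) ⊆ pdom x.val := by
      rw [Finset.coe_union]
      exact Set.union_subset (coe_subset_pdom_of_mem_UW hx₁ hF₁)
        (coe_subset_pdom_of_mem_UW hx₂ hF₂)
    exact ⟨UW x (F₁ ∪ F₂), ⟨x, _, hF, rfl⟩, self_mem_UW x _,
      Set.subset_inter (UW_subset_UW hx₁ Finset.subset_union_left)
        (UW_subset_UW hx₂ Finset.subset_union_right)⟩
  · exact Set.eq_univ_of_forall fun x => Set.mem_sUnion.2
      ⟨UW x ∅, ⟨x, ∅, by simp, rfl⟩, self_mem_UW x ∅⟩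

lemma isOpen_UW {a : INf} {F : Finset ℕ} (hF : ↑F ⊆ pdom a.val) : IsOpen (UW a F) :=
  isTopologicalBasis_BW.isOpen ⟨a, F, hF, rfl⟩

lemma continuous_of_forall_UW {f : INf → INf}
    (h : ∀ a (F : Finset ℕ), ↑F ⊆ pdom (f a).val →
      ∃ G : Finset ℕ, ↑G ⊆ pdom a.val ∧ ∀ a' ∈ UW a G, f a' ∈ UW (f a) F) :
    Continuous f := by
  rw [isTopologicalBasis_BW.continuous_iff]
  rintro _ ⟨γ, F, hF, rfl⟩
  refine isOpen_iff_forall_mem_open.2 fun a ha => ?_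
  obtain ⟨G, hG, hfG⟩ := h a F (coe_subset_pdom_of_mem_UW ha hF)
  exact ⟨UW a G, fun a' ha' => UW_subset_UW ha subset_rfl (hfG a' ha'), isOpen_UW hG,
    self_mem_UW a G⟩

lemma continuous_of_forall_UW₂ {f : INf → INf → INf}
    (h : ∀ a b (F : Finset ℕ), ↑F ⊆ pdom (f a b).val →
      ∃ G H : Finset ℕ, ↑G ⊆ pdom a.val ∧ ↑H ⊆ pdom b.val ∧
        ∀ a' ∈ UW a G, ∀ b' ∈ UW b H, f a' b' ∈ UW (f a b) F) :
    Continuous fun p : INf × INf => f p.1 p.2 := by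
  rw [isTopologicalBasis_BW.continuous_iff]
  rintro _ ⟨γ, F, hF, rfl⟩
  refine isOpen_prod_iff.2 fun a b hab => ?_
  obtain ⟨G, H, hG, hH, hfGH⟩ := h a b F (coe_subset_pdom_of_mem_UW hab hF)
  exact ⟨UW a G, UW b H, isOpen_UW hG, isOpen_UW hH, self_mem_UW a G, self_mem_UW b H,
    fun p ⟨hp₁, hp₂⟩ => UW_subset_UW hab subset_rfl (hfGH p.1 hp₁ p.2 hp₂)⟩

lemma INf.not_isOpen_singleton (a : INf) : ¬IsOpen {a} := by
  intro h
  obtain ⟨_, ⟨γ, F, -, rfl⟩, ha, hsub⟩ := isTopologicalBasis_BW.isOpen_iff.1 h a rfl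
  obtain ⟨m, hm, hmF⟩ := a.2.pdom_infinite.exists_notMem_finset F
  exact INf.erase_ne hm (hsub (UW_subset_UW ha subset_rfl (a.erase_mem_UW hmF)))

lemma tauW_ne_bot : tauW ≠ ⊥ := fun h =>
  have : DiscreteTopology INf := ⟨h⟩
  INf.not_isOpen_singleton ⟨pid, isom_pid⟩ (isOpen_discrete _)

end TauW

/-- The sets `U_α(F)` form a base of a topology `τ_W` on `Iℕ∞` for which composition
of partial maps is jointly continuous and inversion is continuous; moreover `τ_W` is
not discrete. -/
theorem stmt19 :
    ∃ t : TopologicalSpace INf,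
      @TopologicalSpace.IsTopologicalBasis INf t BW ∧
      (∀ comp : INf → INf → INf, (∀ a b, (comp a b).val = PComp a.val b.val) →
        @Continuous (INf × INf) INf (@instTopologicalSpaceProd INf INf t t) t
          (fun p => comp p.1 p.2)) ∧
      (∀ inv : INf → INf, (∀ a, PInv a.val (inv a).val) →
        @Continuous INf INf t t inv) ∧
      t ≠ ⊥ := by
  exact ⟨tauW, isTopologicalBasis_BW,
    fun _ hcomp => continuous_of_forall_UW₂ (exists_UW_comp_mem_UW hcomp),
    fun _ hinv => continuous_of_forall_UW (exists_UW_inv_mem_UW hinv),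
    tauW_ne_bot⟩
end
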